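/- Let D be an ultrafilter on a set I and let X be a GO space. Then X is D-compact if and only if, for every infinite regular cardinal ν such that D is ν-decomposable, every strictly increasing ν-indexed sequence of elements of X has a supremum to which it converges, and every strictly decreasing ν-indexed sequence of elements of X has an infimum to which it converges. -/

import Mathlib

universe u v

open Set Cardinal Filter Topology TopologicalSpace

section Defs

variable {X : Type u} [LinearOrder X]

/-- A subset `Y` of a linear order `X`, having no maximum, is `lam`-full in `X` on the right
if for every `y ∈ Y` the set `⋃ y' ∈ Y, (y, y')` (intervals computed in `X`)
has cardinality at least `lam`. -/
def FullRight (lam : Cardinal.{u}) (Y : Set X) : Prop :=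
  (¬ ∃ m ∈ Y, ∀ y ∈ Y, y ≤ m) ∧
    ∀ y ∈ Y, lam ≤ #(⋃ y' ∈ Y, Ioo y y')

/-- A subset `Y` of a linear order `X`, having no minimum, is `lam`-full in `X` on the left
if for every `y ∈ Y` the set `⋃ y' ∈ Y, (y', y)` (intervals computed in `X`)
has cardinality at least `lam`. -/
def FullLeft (lam : Cardinal.{u}) (Y : Set X) : Prop :=
  (¬ ∃ m ∈ Y, ∀ y ∈ Y, m ≤ y) ∧
    ∀ y ∈ Y, lam ≤ #(⋃ y' ∈ Y, Ioo y' y)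

/-- The pair `(A, B)` is a gap of the space `X`: `A`, `B` are open, `A ∪ B = X`,
every element of `A` is less than every element of `B`, `A` has no maximum and `B` has
no minimum (`A` or `B` may be empty). -/
def IsGap [TopologicalSpace X] (A B : Set X) : Prop :=
  IsOpen A ∧ IsOpen B ∧ A ∪ B = Set.univ ∧ (∀ a ∈ A, ∀ b ∈ B, a < b) ∧
    (¬ ∃ m ∈ A, ∀ a ∈ A, a ≤ m) ∧ (¬ ∃ m ∈ B, ∀ b ∈ B, m ≤ b)

/-- The pair `(A, B)` is a pseudo-gap of the space `X`: `A`, `B` are open and nonempty,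
`A ∪ B = X`, every element of `A` is less than every element of `B`, and either `A` has a
maximum and `B` has no minimum, or `A` has no maximum and `B` has a minimum. -/
def IsPseudoGap [TopologicalSpace X] (A B : Set X) : Prop :=
  IsOpen A ∧ IsOpen B ∧ A ∪ B = Set.univ ∧ (∀ a ∈ A, ∀ b ∈ B, a < b) ∧
    A.Nonempty ∧ B.Nonempty ∧
    (((∃ m ∈ A, ∀ a ∈ A, a ≤ m) ∧ ¬ ∃ m ∈ B, ∀ b ∈ B, m ≤ b) ∨
      ((¬ ∃ m ∈ A, ∀ a ∈ A, a ≤ m) ∧ ∃ m ∈ B, ∀ b ∈ B, m ≤ b))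

/-- The cofinality of `A`: the least cardinality of a subset of `A` cofinal in `A`. -/
noncomputable def cofinCard (A : Set X) : Cardinal.{u} :=
  sInf {c | ∃ S : Set X, S ⊆ A ∧ (∀ a ∈ A, ∃ s ∈ S, a ≤ s) ∧ c = #S}

/-- The coinitiality of `B`: the least cardinality of a subset of `B` coinitial in `B`. -/
noncomputable def coinitCard (B : Set X) : Cardinal.{u} :=
  sInf {c | ∃ S : Set X, S ⊆ B ∧ (∀ b ∈ B, ∃ s ∈ S, s ≤ b) ∧ c = #S}

/-- `mu` is a type of the gap `(A, B)`: `mu` is the cofinality of `A` or the coinitiality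
of `B`. -/
def IsGapType (mu : Cardinal.{u}) (A B : Set X) : Prop :=
  mu = cofinCard A ∨ mu = coinitCard B

/-- `mu` is the type of the pseudo-gap `(A, B)`: the cofinality of `A` if `B` has a minimum,
the coinitiality of `B` if `A` has a maximum. -/
def IsPseudoGapType (mu : Cardinal.{u}) (A B : Set X) : Prop :=
  ((∃ m ∈ B, ∀ b ∈ B, m ≤ b) ∧ mu = cofinCard A) ∨
    ((∃ m ∈ A, ∀ a ∈ A, a ≤ m) ∧ mu = coinitCard B)

end Defs

/-- A topological space is `[ν, ν]`-compact if every open cover of cardinality at most `ν`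
has a subcover of cardinality less than `ν`. -/
def NuNuCompact (X : Type u) [TopologicalSpace X] (ν : Cardinal.{u}) : Prop :=
  ∀ 𝒰 : Set (Set X), (∀ U ∈ 𝒰, IsOpen U) → ⋃₀ 𝒰 = Set.univ → #𝒰 ≤ ν →
    ∃ 𝒱 ⊆ 𝒰, #𝒱 < ν ∧ ⋃₀ 𝒱 = Set.univ

/-- A topological space is weakly `[ν, ν]`-compact if every open cover of cardinality at
most `ν` has a subfamily of cardinality less than `ν` whose union is dense. -/
def WeakNuNuCompact (X : Type u) [TopologicalSpace X] (ν : Cardinal.{u}) : Prop :=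
  ∀ 𝒰 : Set (Set X), (∀ U ∈ 𝒰, IsOpen U) → ⋃₀ 𝒰 = Set.univ → #𝒰 ≤ ν →
    ∃ 𝒱 ⊆ 𝒰, #𝒱 < ν ∧ Dense (⋃₀ 𝒱)

/-- A topological space is initially `lam`-compact if every open cover of cardinality at
most `lam` has a finite subcover. -/
def InitiallyCompact (X : Type u) [TopologicalSpace X] (lam : Cardinal.{u}) : Prop :=
  ∀ 𝒰 : Set (Set X), (∀ U ∈ 𝒰, IsOpen U) → ⋃₀ 𝒰 = Set.univ → #𝒰 ≤ lam →
    ∃ 𝒱 ⊆ 𝒰, 𝒱.Finite ∧ ⋃₀ 𝒱 = Set.univ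

/-- A topological space is weakly initially `lam`-compact if every open cover of cardinality
at most `lam` has a finite subfamily whose union is dense. -/
def WeakInitiallyCompact (X : Type u) [TopologicalSpace X] (lam : Cardinal.{u}) : Prop :=
  ∀ 𝒰 : Set (Set X), (∀ U ∈ 𝒰, IsOpen U) → ⋃₀ 𝒰 = Set.univ → #𝒰 ≤ lam →
    ∃ 𝒱 ⊆ 𝒰, 𝒱.Finite ∧ Dense (⋃₀ 𝒱)

/-- The sequence `x` `D`-converges to `p`: for every open neighbourhood `U` of `p`,
`{i | x i ∈ U} ∈ D`. -/
def DConv {I : Type v} {X : Type u} [TopologicalSpace X] (D : Ultrafilter I)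
    (x : I → X) (p : X) : Prop :=
  ∀ U : Set X, IsOpen U → p ∈ U → {i | x i ∈ U} ∈ D

/-- `X` is `D`-compact: every `I`-indexed sequence of elements of `X` `D`-converges to some
point of `X`. -/
def DCompact {I : Type v} (D : Ultrafilter I) (X : Type u) [TopologicalSpace X] : Prop :=
  ∀ x : I → X, ∃ p : X, DConv D x p

/-- `p` is a `D`-limit point of the sequence of sets `Y`: for every neighbourhood `U`
of `p`, `{i | U ∩ Y i ≠ ∅} ∈ D`. -/
def DLimitPt {I : Type v} {X : Type u} [TopologicalSpace X] (D : Ultrafilter I)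
    (Y : I → Set X) (p : X) : Prop :=
  ∀ U ∈ nhds p, {i | (U ∩ Y i).Nonempty} ∈ D

/-- `X` is `D`-pseudocompact: every `I`-indexed sequence of nonempty open sets of `X` has a
`D`-limit point. -/
def DPseudocompact {I : Type v} (D : Ultrafilter I) (X : Type u) [TopologicalSpace X] : Prop :=
  ∀ O : I → Set X, (∀ i, IsOpen (O i)) → (∀ i, (O i).Nonempty) → ∃ p : X, DLimitPt D O p

/-- The ultrafilter `D` is `ν`-decomposable: there is `f : I → ν` such that the preimage of
every subset of `ν` of cardinality less than `ν` is not in `D`. -/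
def Decomposable {I : Type v} (D : Ultrafilter I) (ν : Cardinal.{u}) : Prop :=
  ∃ f : I → ν.ord.ToType, ∀ S : Set ν.ord.ToType, #S < ν → f ⁻¹' S ∉ D


/-!
If `D` is `ν`-decomposable via `h : I → ν`, then `h` tends to infinity along `D`. So for a
monotone `f : ν → X`, the `D`-limit `p` of `f ∘ h` is an upper bound of `f` lying in the closure
of its range; as open rays and order-convex neighbourhoods are available in a GO space, `p` is
then the supremum and the limit of `f`.

Conversely, given `x : I → X`, let `L` be the set of points lying `D`-almost surely below `x`.
Reversing the order if necessary, `x i ∈ L` for `D`-almost all `i`. If `L` has a greatest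
element `m`, then `x = m` `D`-almost surely. Otherwise pick a strictly increasing sequence `g`
cofinal in `L` of regular length `ν = cf L`; sending `i` to an index `γ` with `x i < g γ` shows
that `D` is `ν`-decomposable, and `x` `D`-converges to the limit `s` of `g`, because `s ∉ L`
gives `g γ ≤ x i ≤ s` almost surely.
-/

namespace Order

theorem exists_isCofinal_wellFoundedLT (α : Type*) [LinearOrder α] :
    ∃ s : Set α, IsCofinal s ∧ WellFoundedLT s := by
  -- The records of a well-ordering `r` form a cofinal set on which `<` is contained in `r`.
  refine ⟨_, isCofinal_setOfPred_imp_lt WellOrderingRel, ⟨Subrelation.wf ?_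
    (InvImage.wf Subtype.val (WellOrderingRel.isWellOrder (α := α)).wf)⟩⟩
  intro a b hab
  rcases trichotomous_of WellOrderingRel a.1 b.1 with h | h | h
  · exact h
  · exact absurd (Subtype.ext h) hab.ne
  · exact absurd (a.2 b.1 h) (lt_asymm hab)

theorem exists_strictMono_isCofinal_range (α : Type u) [LinearOrder α] :
    ∃ g : (cof α).ord.ToType → α, StrictMono g ∧ IsCofinal (range g) := by
  obtain ⟨s, hs, _⟩ := exists_isCofinal_wellFoundedLT α
  obtain ⟨t, ht, htype⟩ := Ordinal.exists_ord_cof_eq s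
  rw [cof_eq_of_isCofinal hs, ← Ordinal.type_toType (cof α).ord] at htype
  let e : (cof α).ord.ToType ≃o t := .ofRelIsoLT (Ordinal.type_eq.1 htype).some.symm
  refine ⟨fun γ => (e γ).1.1, fun γ γ' h => e.strictMono h, fun a => ?_⟩
  obtain ⟨b, hb, hab⟩ := hs a
  obtain ⟨c, hc, hbc⟩ := ht ⟨b, hb⟩
  exact ⟨c.1, ⟨e.symm ⟨c, hc⟩, by simp⟩, hab.trans hbc⟩

theorem isRegular_cof (α : Type u) [LinearOrder α] [Nonempty α] [NoMaxOrder α] :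
    (cof α).IsRegular := by
  obtain ⟨g, hg, hcof⟩ := exists_strictMono_isCofinal_range α
  exact ⟨aleph0_le_cof, by rw [← Ordinal.cof_toType, cof_congr_of_strictMono hg hcof]⟩

end Order

theorem Set.exists_isRegular_strictMono_cofinal {X : Type u} [LinearOrder X] {S : Set X}
    (hS : S.Nonempty) (hmax : ¬ ∃ m, IsGreatest S m) :
    ∃ ν : Cardinal.{u}, ν.IsRegular ∧ ∃ g : ν.ord.ToType → X,
      StrictMono g ∧ range g ⊆ S ∧ ∀ a ∈ S, ∃ γ, a < g γ := by
  have : Nonempty S := hS.to_subtype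
  have : NoMaxOrder S := ⟨fun a => by
    obtain ⟨b, hbS, hab⟩ : ∃ b ∈ S, a.1 < b := by
      simpa [IsGreatest, upperBounds] using fun h => hmax ⟨a, a.2, h⟩
    exact ⟨⟨b, hbS⟩, hab⟩⟩
  obtain ⟨g, hg, hcof⟩ := Order.exists_strictMono_isCofinal_range S
  refine ⟨_, Order.isRegular_cof S, _, (Subtype.strictMono_coe _).comp hg,
    range_subset_iff.2 fun γ => (g γ).2, fun a ha => ?_⟩
  obtain ⟨b, hab⟩ := exists_gt (⟨a, ha⟩ : S)
  obtain ⟨_, ⟨γ, rfl⟩, hbγ⟩ := hcof b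
  exact ⟨γ, hab.trans_le hbγ⟩

section Decomposable

variable {I : Type v} {D : Ultrafilter I} {ν : Cardinal.{u}}

theorem Decomposable.exists_tendsto_atTop (hD : Decomposable D ν) :
    ∃ f : I → ν.ord.ToType, Tendsto f D atTop := by
  obtain ⟨f, hf⟩ := hD
  refine ⟨f, tendsto_atTop.2 fun γ => ?_⟩
  have := Ultrafilter.compl_mem_iff_notMem.2 (hf (Iio γ) (by simpa using mk_Iio_lt γ))
  exact mem_of_superset this fun i hi => not_lt.1 (show ¬ f i < γ from hi)

theorem decomposable_of_tendsto_atTop (hν : ν.IsRegular) {f : I → ν.ord.ToType}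
    (hf : Tendsto f D atTop) : Decomposable D ν := by
  refine ⟨f, fun S hS hfS => ?_⟩
  have hS' : ¬ IsCofinal S := fun hcof =>
    (Order.cof_le hcof).not_gt (by rwa [Ordinal.cof_toType, hν.cof_ord])
  obtain ⟨γ, hγ⟩ := not_isCofinal_iff.1 hS'
  obtain ⟨i, hiS, hγi⟩ := Filter.nonempty_of_mem (inter_mem hfS (tendsto_atTop.1 hf γ))
  exact (hγ _ hiS).not_ge hγi

theorem decomposable_of_eventually_le_of_eventually_lt {X : Type*} [Preorder X]
    (hν : ν.IsRegular) {g : ν.ord.ToType → X} (hg : Monotone g) {x : I → X}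
    (hle : ∀ γ, ∀ᶠ i in D, g γ ≤ x i) (hlt : ∀ᶠ i in D, ∃ γ, x i < g γ) :
    Decomposable D ν := by
  obtain ⟨_, γ, -⟩ := hlt.exists
  have : Nonempty ν.ord.ToType := ⟨γ⟩
  refine decomposable_of_tendsto_atTop hν (f := fun i => Classical.epsilon fun γ => x i < g γ)
    (tendsto_atTop.2 fun γ => ?_)
  filter_upwards [hle γ, hlt] with i hγ hi
  exact (hg.reflect_lt (hγ.trans_lt (Classical.epsilon_spec hi))).le

end Decomposable

theorem dConv_iff_tendsto {I X : Type*} [TopologicalSpace X] {D : Ultrafilter I}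
    {x : I → X} {p : X} : DConv D x p ↔ Tendsto x D (𝓝 p) := by
  rw [(nhds_basis_opens p).tendsto_right_iff]
  exact ⟨fun h U hU => h U hU.2 hU.1, fun h U hU hpU => h U ⟨hpU, hU⟩⟩

theorem Ultrafilter.eventually_eventually_le_or_ge {I X : Type*} [LinearOrder X]
    (D : Ultrafilter I) (x : I → X) :
    (∀ᶠ i in D, ∀ᶠ j in D, x i ≤ x j) ∨ ∀ᶠ i in D, ∀ᶠ j in D, x j ≤ x i :=
  eventually_or.1 <| .of_forall fun i =>
    eventually_or.1 <| .of_forall fun j => le_total (x i) (x j)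

def HasOrdConnectedBasis (X : Type*) [LinearOrder X] [TopologicalSpace X] : Prop :=
  ∃ 𝓑 : Set (Set X), IsTopologicalBasis 𝓑 ∧ ∀ s ∈ 𝓑, s.OrdConnected

namespace HasOrdConnectedBasis

variable {X : Type*} [LinearOrder X] [TopologicalSpace X]

theorem dual (hX : HasOrdConnectedBasis X) : HasOrdConnectedBasis Xᵒᵈ :=
  let ⟨𝓑, hB, hconv⟩ := hX
  ⟨𝓑, hB, fun s hs => (hconv s hs).dual⟩

theorem exists_ordConnected_subset (hX : HasOrdConnectedBasis X) {p : X} {U : Set X}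
    (hU : U ∈ 𝓝 p) : ∃ V ∈ 𝓝 p, V.OrdConnected ∧ V ⊆ U := by
  obtain ⟨𝓑, hB, hconv⟩ := hX
  obtain ⟨V, hVB, hpV, hVU⟩ := hB.mem_nhds_iff.1 hU
  exact ⟨V, hB.mem_nhds hVB hpV, hconv V hVB, hVU⟩

theorem isOpen_Iio [T1Space X] (hX : HasOrdConnectedBasis X) (a : X) : IsOpen (Iio a) := by
  refine isOpen_iff_mem_nhds.2 fun p hp => ?_
  obtain ⟨V, hV, hVc, hVa⟩ := hX.exists_ordConnected_subset (compl_singleton_mem_nhds hp.ne)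
  refine mem_of_superset hV fun y hy => not_le.1 fun hay => ?_
  exact hVa (hVc.out (mem_of_mem_nhds hV) hy ⟨hp.le, hay⟩) rfl

theorem isOpen_Ioi [T1Space X] (hX : HasOrdConnectedBasis X) (a : X) : IsOpen (Ioi a) :=
  have : T1Space Xᵒᵈ := inferInstanceAs (T1Space X)
  hX.dual.isOpen_Iio (OrderDual.toDual a)

theorem closedIciTopology [T1Space X] (hX : HasOrdConnectedBasis X) : ClosedIciTopology X :=
  ⟨fun a => by simpa using (hX.isOpen_Iio a).isClosed_compl⟩

theorem isLUB_of_mem_closure [T1Space X] (hX : HasOrdConnectedBasis X) {s : Set X} {p : X}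
    (hub : p ∈ upperBounds s) (hcl : p ∈ closure s) : IsLUB s p := by
  refine ⟨hub, fun b hb => not_lt.1 fun hbp => ?_⟩
  obtain ⟨y, hby, hys⟩ := mem_closure_iff.1 hcl _ (hX.isOpen_Ioi b) hbp
  exact (hb hys).not_gt hby

theorem tendsto_of_forall_exists_eventually_mem_Icc (hX : HasOrdConnectedBasis X) {α : Type*}
    {l : Filter α} {x : α → X} {p : X} (h : ∀ U ∈ 𝓝 p, ∃ a ∈ U, ∀ᶠ i in l, x i ∈ Icc a p) :
    Tendsto x l (𝓝 p) := fun U hU => by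
  obtain ⟨V, hV, hVc, hVU⟩ := hX.exists_ordConnected_subset hU
  obtain ⟨a, haV, ha⟩ := h V hV
  exact ha.mono fun i hi => hVU (hVc.out haV (mem_of_mem_nhds hV) hi)

theorem tendsto_atTop_of_monotone (hX : HasOrdConnectedBasis X) {α : Type*} [Preorder α]
    {f : α → X} {p : X} (hf : Monotone f) (hub : p ∈ upperBounds (range f))
    (hcl : p ∈ closure (range f)) : Tendsto f atTop (𝓝 p) :=
  hX.tendsto_of_forall_exists_eventually_mem_Icc fun U hU => by
    obtain ⟨_, hU', γ, rfl⟩ := mem_closure_iff_nhds.1 hcl U hU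
    exact ⟨f γ, hU', mem_of_superset (mem_atTop γ) fun δ hδ => ⟨hf hδ, hub ⟨δ, rfl⟩⟩⟩

variable {I : Type v} {D : Ultrafilter I}

theorem exists_isLUB_tendsto_of_dCompact [T1Space X] (hX : HasOrdConnectedBasis X)
    (hc : DCompact D X) {ν : Cardinal.{u}} (hD : Decomposable D ν) {f : ν.ord.ToType → X}
    (hf : Monotone f) :
    ∃ s, IsLUB (range f) s ∧ Tendsto f atTop (𝓝 s) := by
  obtain ⟨h, hh⟩ := hD.exists_tendsto_atTop
  obtain ⟨p, hp⟩ := hc (f ∘ h)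
  rw [dConv_iff_tendsto] at hp
  have := hX.closedIciTopology
  have hub : p ∈ upperBounds (range f) := by
    rintro _ ⟨γ, rfl⟩
    exact ge_of_tendsto hp ((tendsto_atTop.1 hh γ).mono fun i hi => hf hi)
  have hcl : p ∈ closure (range f) :=
    mem_closure_of_tendsto hp (.of_forall fun i => mem_range_self (h i))
  exact ⟨p, hX.isLUB_of_mem_closure hub hcl, hX.tendsto_atTop_of_monotone hf hub hcl⟩

end HasOrdConnectedBasis

theorem HasOrdConnectedBasis.exists_tendsto_of_eventually_eventually_le {I : Type v}
    {D : Ultrafilter I} {X : Type u} [LinearOrder X] [TopologicalSpace X]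
    (hX : HasOrdConnectedBasis X)
    (hsup : ∀ ν : Cardinal.{u}, ν.IsRegular → Decomposable D ν →
      ∀ f : ν.ord.ToType → X, StrictMono f → ∃ s, IsLUB (range f) s ∧ Tendsto f atTop (𝓝 s))
    {x : I → X} (hx : ∀ᶠ i in D, ∀ᶠ j in D, x i ≤ x j) : ∃ p, Tendsto x D (𝓝 p) := by
  set L := {a | ∀ᶠ j in (D : Filter I), a ≤ x j}
  by_cases hmax : ∃ m, IsGreatest L m
  · obtain ⟨m, hmL, hm⟩ := hmax
    refine ⟨m, tendsto_const_nhds.congr' ?_⟩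
    filter_upwards [hx, hmL] with i hi hmi using le_antisymm hmi (hm hi)
  obtain ⟨i₀, hi₀⟩ := hx.exists
  obtain ⟨ν, hreg, g, hg, hrange, hLg⟩ := Set.exists_isRegular_strictMono_cofinal ⟨x i₀, hi₀⟩ hmax
  have hgL (γ) : ∀ᶠ i in D, g γ ≤ x i := hrange ⟨γ, rfl⟩
  have hD := decomposable_of_eventually_le_of_eventually_lt hreg hg.monotone hgL
    (hx.mono fun i => hLg (x i))
  obtain ⟨s, hs, hgs⟩ := hsup ν hreg hD g hg
  have hsL : s ∉ L := fun hsL =>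
    let ⟨γ, hγ⟩ := hLg s hsL
    (hs.1 ⟨γ, rfl⟩).not_gt hγ
  have hxs : ∀ᶠ i in D, x i ≤ s :=
    (Ultrafilter.eventually_not.2 hsL).mono fun i hi => (not_le.1 hi).le
  have : Nonempty ν.ord.ToType := ⟨(hLg _ hi₀).choose⟩
  refine ⟨s, hX.tendsto_of_forall_exists_eventually_mem_Icc fun U hU => ?_⟩
  obtain ⟨γ, hγ⟩ := (hgs.eventually_mem hU).exists
  exact ⟨g γ, hγ, (hgL γ).and hxs⟩

/-- A GO space is `D`-compact iff, for every infinite regular `ν` such that `D` is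
`ν`-decomposable, every strictly increasing `ν`-indexed sequence has a supremum to
which it converges and every strictly decreasing `ν`-indexed sequence has an infimum
to which it converges. -/
theorem stmt9 {I : Type v} (D : Ultrafilter I)
    (X : Type u) [LinearOrder X] [TopologicalSpace X] [T2Space X]
    (hGO : ∃ 𝓑 : Set (Set X), IsTopologicalBasis 𝓑 ∧ ∀ s ∈ 𝓑, s.OrdConnected) :
    DCompact D X ↔
      ∀ ν : Cardinal.{u}, ℵ₀ ≤ ν → ν.IsRegular → Decomposable D ν →
        (∀ f : ν.ord.ToType → X, StrictMono f →
          ∃ s : X, IsLUB (Set.range f) s ∧ Tendsto f atTop (𝓝 s)) ∧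
        (∀ f : ν.ord.ToType → X, StrictAnti f →
          ∃ s : X, IsGLB (Set.range f) s ∧ Tendsto f atTop (𝓝 s)) := by
  have hX : HasOrdConnectedBasis X := hGO
  have : T1Space Xᵒᵈ := inferInstanceAs (T1Space X)
  constructor
  · intro hc ν _ _ hD
    exact ⟨fun f hf => hX.exists_isLUB_tendsto_of_dCompact hc hD hf.monotone,
      fun f hf => hX.dual.exists_isLUB_tendsto_of_dCompact hc hD (f := OrderDual.toDual ∘ f)
        hf.dual_right.monotone⟩
  · intro h x
    simp only [dConv_iff_tendsto]
    rcases D.eventually_eventually_le_or_ge x with hx | hx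
    · exact hX.exists_tendsto_of_eventually_eventually_le
        (fun ν hreg hD => (h ν hreg.aleph0_le hreg hD).1) hx
    · exact hX.dual.exists_tendsto_of_eventually_eventually_le (x := OrderDual.toDual ∘ x)
        (fun ν hreg hD f hf =>
          (h ν hreg.aleph0_le hreg hD).2 (OrderDual.ofDual ∘ f) hf.dual_right) hx
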